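/- Let R be a commutative ring with a distinguished invertible element q^{1/2} (write q = (q^{1/2})^2), let r ≥ 1, and let Q be an antisymmetric r×r integer matrix. Then the quantum torus T(Q) is a free R-module, and the set of normalized monomials { x^k : k ∈ ℤ^r } is a free R-module basis of T(Q). -/

import Mathlib

open scoped BigOperators Matrix

/-- Defining relations of the quantum torus `T(Q)` over a commutative ring `R`
with distinguished invertible element `sqq = q^{1/2}` (so `q = sqq^2`):
generators `x_i = ι (Sum.inl i)` and their inverses `x_i⁻¹ = ι (Sum.inr i)`,
relations `x_i x_i⁻¹ = x_i⁻¹ x_i = 1` and `x_i x_j = q^{Q i j} x_j x_i`. -/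
inductive QTRel (R : Type) [CommRing R] (sqq : Rˣ) {r : ℕ} (Q : Matrix (Fin r) (Fin r) ℤ) :
    FreeAlgebra R (Fin r ⊕ Fin r) → FreeAlgebra R (Fin r ⊕ Fin r) → Prop
  | mul_inv (i : Fin r) :
      QTRel R sqq Q (FreeAlgebra.ι R (Sum.inl i) * FreeAlgebra.ι R (Sum.inr i)) 1
  | inv_mul (i : Fin r) :
      QTRel R sqq Q (FreeAlgebra.ι R (Sum.inr i) * FreeAlgebra.ι R (Sum.inl i)) 1
  | qcomm (i j : Fin r) :
      QTRel R sqq Q (FreeAlgebra.ι R (Sum.inl i) * FreeAlgebra.ι R (Sum.inl j))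
        (((sqq ^ (2 * Q i j) : Rˣ) : R) •
          (FreeAlgebra.ι R (Sum.inl j) * FreeAlgebra.ι R (Sum.inl i)))

/-- The quantum torus `T(Q)`. -/
def QuantumTorus (R : Type) [CommRing R] (sqq : Rˣ) {r : ℕ}
    (Q : Matrix (Fin r) (Fin r) ℤ) : Type :=
  RingQuot (QTRel R sqq Q)

noncomputable instance (R : Type) [CommRing R] (sqq : Rˣ) {r : ℕ}
    (Q : Matrix (Fin r) (Fin r) ℤ) : Ring (QuantumTorus R sqq Q) :=
  inferInstanceAs (Ring (RingQuot (QTRel R sqq Q)))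

noncomputable instance (R : Type) [CommRing R] (sqq : Rˣ) {r : ℕ}
    (Q : Matrix (Fin r) (Fin r) ℤ) : Algebra R (QuantumTorus R sqq Q) :=
  inferInstanceAs (Algebra R (RingQuot (QTRel R sqq Q)))

namespace QuantumTorus

variable {R : Type} [CommRing R] (sqq : Rˣ) {r : ℕ} (Q : Matrix (Fin r) (Fin r) ℤ)

/-- The generator `x_i` of the quantum torus. -/
noncomputable def X (i : Fin r) : QuantumTorus R sqq Q :=
  RingQuot.mkAlgHom R (QTRel R sqq Q) (FreeAlgebra.ι R (Sum.inl i))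

/-- The inverse generator `x_i⁻¹` of the quantum torus. -/
noncomputable def Xinv (i : Fin r) : QuantumTorus R sqq Q :=
  RingQuot.mkAlgHom R (QTRel R sqq Q) (FreeAlgebra.ι R (Sum.inr i))

/-- `x_i^k` for `k : ℤ`, using the inverse generator for negative powers. -/
noncomputable def genPow (i : Fin r) (k : ℤ) : QuantumTorus R sqq Q :=
  if 0 ≤ k then X sqq Q i ^ k.toNat else Xinv sqq Q i ^ (-k).toNat

end QuantumTorus

/-- The pairing `⟨k,k'⟩_Q = ∑_{i,j} Q i j * k i * k' j`. -/
def quantumPairing {r : ℕ} (Q : Matrix (Fin r) (Fin r) ℤ) (k k' : Fin r → ℤ) : ℤ :=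
  ∑ i, ∑ j, Q i j * k i * k' j

/-- The sum `∑_{i<j} Q i j * k i * k j` used to normalize monomials. -/
def quantumUpperSum {r : ℕ} (Q : Matrix (Fin r) (Fin r) ℤ) (k : Fin r → ℤ) : ℤ :=
  ∑ i, ∑ j, if i < j then Q i j * k i * k j else 0

/-- The normalized monomial
`x^k = q^{-(1/2) ∑_{i<j} Q i j k_i k_j} x_1^{k_1} ⋯ x_r^{k_r}`. -/
noncomputable def QuantumTorus.monomial {R : Type} [CommRing R] (sqq : Rˣ) {r : ℕ}
    (Q : Matrix (Fin r) (Fin r) ℤ) (k : Fin r → ℤ) : QuantumTorus R sqq Q :=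
  ((sqq ^ (-(quantumUpperSum Q k)) : Rˣ) : R) •
    ((List.finRange r).map (fun i => QuantumTorus.genPow sqq Q i (k i))).prod

/-!
Modulo the central subgroup of scalar units, the generators `x_i` of `T(Q)ˣ` commute, so left
multiplication by `x_i^{±1}` carries every monomial to a unit multiple of another one; since
`x^0 = 1`, the monomials span. For independence, let `x_i^{±1}` act on `R[ℤ^r]` by the twisted
shift `e_k ↦ q^{⟨v,k⟩/2} e_{v+k}` with `v = ±e_i` and `⟨v,w⟩ = vᵀ Q w`: these operators satisfy the
defining relations precisely because `Q` is antisymmetric, and `x^k` sends `e_0` to a unit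
multiple of `e_k`.
-/

theorem zpow_mul_prod_map_zpow {G ι : Type*} [Group G] [DecidableEq ι] {v : ι → G}
    (hv : Pairwise fun i j => Commute (v i) (v j)) {L : List ι} (hL : L.Nodup) {i : ι}
    (hi : i ∈ L) (n : ℤ) (f : ι → ℤ) :
    v i ^ n * (L.map fun j => v j ^ f j).prod
      = (L.map fun j => v j ^ (f + Pi.single i n : ι → ℤ) j).prod := by
  induction L with
  | nil => simp at hi
  | cons j L ih =>
    obtain ⟨hjL, hL⟩ := List.nodup_cons.1 hL
    simp only [List.map_cons, List.prod_cons]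
    by_cases hji : j = i
    · subst hji
      have hrest :
          (L.map fun l => v l ^ (f + Pi.single j n : ι → ℤ) l) = L.map fun l => v l ^ f l :=
        List.map_congr_left fun l hl => by simp [ne_of_mem_of_not_mem hl hjL]
      rw [hrest, ← mul_assoc, ← zpow_add]
      simp [add_comm]
    · have hi' : i ∈ L := (List.mem_cons.1 hi).resolve_left (Ne.symm hji)
      rw [← mul_assoc, ((hv (Ne.symm hji)).zpow_zpow n (f j)).eq, mul_assoc, ih hL hi']
      simp [hji]

theorem span_range_eq_top_of_mul_mem {R A ι : Type*} [CommSemiring R] [Semiring A] [Algebra R A]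
    {s : Set A} (hs : Algebra.adjoin R s = ⊤) {v : ι → A}
    (h1 : 1 ∈ Submodule.span R (Set.range v))
    (hv : ∀ a ∈ s, ∀ i, a * v i ∈ Submodule.span R (Set.range v)) :
    Submodule.span R (Set.range v) = ⊤ := by
  set S := Submodule.span R (Set.range v)
  have hgen (a : A) (ha : a ∈ s) : S ≤ S.comap (LinearMap.mulLeft R a) :=
    Submodule.span_le.2 (Set.range_subset_iff.2 (hv a ha))
  have hmul : ∀ a : A, ∀ y ∈ S, a * y ∈ S := by
    intro a
    induction (hs ▸ Algebra.mem_top : a ∈ Algebra.adjoin R s) using Algebra.adjoin_induction with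
    | mem a ha => exact hgen a ha
    | algebraMap c => exact fun y hy => Algebra.smul_def c y ▸ S.smul_mem c hy
    | add a b _ _ ha hb => exact fun y hy => (add_mul a b y).symm ▸ S.add_mem (ha y hy) (hb y hy)
    | mul a b _ _ ha hb => exact fun y hy => (mul_assoc a b y).symm ▸ ha _ (hb y hy)
  exact Submodule.eq_top_iff'.2 fun a => by simpa using hmul a 1 h1

theorem RingQuot.adjoin_range_mkAlgHom_ι {R X : Type*} [CommSemiring R]
    (rel : FreeAlgebra R X → FreeAlgebra R X → Prop) :
    Algebra.adjoin R (Set.range (RingQuot.mkAlgHom R rel ∘ FreeAlgebra.ι R)) = ⊤ := by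
  rw [Set.range_comp, Algebra.adjoin_image, FreeAlgebra.adjoin_range_ι, Algebra.map_top,
    AlgHom.range_eq_top]
  exact RingQuot.mkAlgHom_surjective R rel

theorem Matrix.apply_swap_eq_neg_of_transpose_eq_neg {n α : Type*} [Neg α] {A : Matrix n n α}
    (hA : Aᵀ = -A) (i j : n) : A j i = -A i j :=
  congr_fun₂ hA i j

theorem Matrix.apply_self_eq_zero_of_transpose_eq_neg {n : Type*} {A : Matrix n n ℤ}
    (hA : Aᵀ = -A) (i : n) : A i i = 0 := by
  have := apply_swap_eq_neg_of_transpose_eq_neg hA i i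
  omega

section ScalarUnits

variable (R A : Type*) [CommSemiring R] [Semiring A] [Algebra R A]

def scalarUnits : Subgroup Aˣ := (Units.map (algebraMap R A : R →* A)).range

instance : (scalarUnits R A).Normal where
  conj_mem := by
    rintro _ ⟨c, rfl⟩ g
    refine ⟨c, Units.ext ?_⟩
    simp only [Units.coe_map, Units.val_mul, MonoidHom.coe_coe]
    rw [← Algebra.commutes, mul_assoc, Units.mul_inv, mul_one]

variable {R A}

theorem exists_smul_eq_of_mk_eq {a b : Aˣ} (h : (a : Aˣ ⧸ scalarUnits R A) = b) :
    ∃ c : Rˣ, (b : A) = c • (a : A) := by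
  obtain ⟨c, hc⟩ := QuotientGroup.eq.1 h
  refine ⟨c, ?_⟩
  rw [← eq_inv_mul_iff_mul_eq.1 hc, Units.val_mul, Units.coe_map, MonoidHom.coe_coe,
    ← Algebra.commutes, ← Algebra.smul_def, Units.smul_def]

end ScalarUnits

section TwistedShift

variable {R G : Type*} [CommSemiring R] [AddCommMonoid G] (β : G →+ G →+ ℤ) (z : Rˣ)

noncomputable def twistedShift (v : G) : Module.End R (G →₀ R) :=
  Finsupp.lsum R fun k => (z ^ β v k) • Finsupp.lsingle (v + k)

@[simp]
theorem twistedShift_single (v k : G) (c : R) :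
    twistedShift β z v (Finsupp.single k c) = (z ^ β v k) • Finsupp.single (v + k) c := by
  simp [twistedShift]

theorem twistedShift_zero : twistedShift β z 0 = (1 : Module.End R (G →₀ R)) :=
  Finsupp.lhom_ext fun k c => by simp

theorem twistedShift_mul (v w : G) :
    twistedShift β z v * twistedShift β z w = (z ^ β v w) • twistedShift β z (v + w) :=
  Finsupp.lhom_ext fun k c => by
    simp only [Module.End.mul_apply, LinearMap.smul_apply, twistedShift_single, Units.smul_def,
      map_smul, smul_smul, ← Units.val_mul, ← zpow_add, map_add, AddMonoidHom.add_apply, add_assoc]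
    ac_rfl

theorem twistedShift_pow {v : G} (hv : β v v = 0) (n : ℕ) :
    twistedShift β z v ^ n = twistedShift β z (n • v) := by
  induction n with
  | zero => simp [twistedShift_zero]
  | succ n ih =>
    rw [pow_succ, ih, twistedShift_mul, map_nsmul, AddMonoidHom.nsmul_apply, hv]
    simp [add_smul, add_comm]

theorem exists_prod_map_twistedShift (vs : List G) :
    ∃ u : Rˣ, (vs.map (twistedShift β z)).prod = u • twistedShift β z vs.sum := by
  induction vs with
  | nil => exact ⟨1, by simp [twistedShift_zero]⟩
  | cons v vs ih =>
    obtain ⟨u, hu⟩ := ih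
    refine ⟨z ^ β v vs.sum * u, ?_⟩
    rw [List.map_cons, List.prod_cons, hu, mul_smul_comm, twistedShift_mul, smul_smul,
      mul_comm, List.sum_cons]

end TwistedShift

namespace QuantumTorus

section Span

variable {R : Type} [CommRing R] (sqq : Rˣ) {r : ℕ} (Q : Matrix (Fin r) (Fin r) ℤ)

def pairingHom : (Fin r → ℤ) →+ (Fin r → ℤ) →+ ℤ :=
  LinearMap.toAddMonoidHom'.comp (Matrix.toLinearMap₂' ℤ Q).toAddMonoidHom

theorem pairingHom_single_single (i j : Fin r) :
    pairingHom Q (Pi.single i 1) (Pi.single j 1) = Q i j := by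
  simp [pairingHom, Matrix.toLinearMap₂'_apply']

theorem X_mul_Xinv (i : Fin r) : X sqq Q i * Xinv sqq Q i = 1 := by
  have h := RingQuot.mkAlgHom_rel R (QTRel.mul_inv (sqq := sqq) (Q := Q) i)
  rwa [map_mul, map_one] at h

theorem Xinv_mul_X (i : Fin r) : Xinv sqq Q i * X sqq Q i = 1 := by
  have h := RingQuot.mkAlgHom_rel R (QTRel.inv_mul (sqq := sqq) (Q := Q) i)
  rwa [map_mul, map_one] at h

theorem X_mul_X (i j : Fin r) :
    X sqq Q i * X sqq Q j = (sqq ^ (2 * Q i j)) • (X sqq Q j * X sqq Q i) := by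
  have h := RingQuot.mkAlgHom_rel R (QTRel.qcomm (sqq := sqq) (Q := Q) i j)
  rwa [map_mul, map_smul, map_mul] at h

noncomputable def unitX (i : Fin r) : (QuantumTorus R sqq Q)ˣ :=
  ⟨X sqq Q i, Xinv sqq Q i, X_mul_Xinv sqq Q i, Xinv_mul_X sqq Q i⟩

theorem genPow_eq_val_zpow (i : Fin r) (m : ℤ) : genPow sqq Q i m = ↑(unitX sqq Q i ^ m) := by
  cases m with
  | ofNat n => simp [genPow, unitX]
  | negSucc n => simp [genPow, unitX, zpow_negSucc]

noncomputable def unitMonomial (k : Fin r → ℤ) : (QuantumTorus R sqq Q)ˣ :=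
  ((List.finRange r).map fun i => unitX sqq Q i ^ k i).prod

theorem monomial_eq_smul (k : Fin r → ℤ) :
    monomial sqq Q k
      = sqq ^ (-quantumUpperSum Q k) • (unitMonomial sqq Q k : QuantumTorus R sqq Q) := by
  rw [monomial, unitMonomial, Units.smul_def, ← Units.coeHom_apply (M := QuantumTorus R sqq Q),
    map_list_prod, List.map_map]
  simp only [Function.comp_def, Units.coeHom_apply, genPow_eq_val_zpow]

theorem mk_unitX_commute :
    Pairwise fun i j => Commute (unitX sqq Q i : (QuantumTorus R sqq Q)ˣ ⧸ scalarUnits R _)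
      (unitX sqq Q j) := by
  intro i j _
  have hij : unitX sqq Q i * unitX sqq Q j
      = Units.map (algebraMap R (QuantumTorus R sqq Q) : R →* QuantumTorus R sqq Q)
          (sqq ^ (2 * Q i j)) * (unitX sqq Q j * unitX sqq Q i) := by
    ext
    rw [Units.val_mul, Units.val_mul, Units.val_mul, Units.coe_map, MonoidHom.coe_coe,
      ← Algebra.smul_def]
    exact X_mul_X sqq Q i j
  have hc : (Units.map (algebraMap R (QuantumTorus R sqq Q) : R →* QuantumTorus R sqq Q)
      (sqq ^ (2 * Q i j)) : (QuantumTorus R sqq Q)ˣ ⧸ scalarUnits R _) = 1 :=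
    (QuotientGroup.eq_one_iff _).2 ⟨_, rfl⟩
  change _ * _ = _ * _
  rw [← QuotientGroup.mk_mul, ← QuotientGroup.mk_mul, hij, QuotientGroup.mk_mul, hc, one_mul]

theorem exists_unitX_zpow_mul_unitMonomial (i : Fin r) (n : ℤ) (k : Fin r → ℤ) :
    ∃ c : Rˣ, ((unitX sqq Q i ^ n : (QuantumTorus R sqq Q)ˣ) : QuantumTorus R sqq Q)
        * unitMonomial sqq Q k = c • (unitMonomial sqq Q (k + Pi.single i n) : _) := by
  rw [← Units.val_mul]
  refine exists_smul_eq_of_mk_eq ?_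
  have hmk (k : Fin r → ℤ) : (unitMonomial sqq Q k : (QuantumTorus R sqq Q)ˣ ⧸ scalarUnits R _)
      = ((List.finRange r).map fun j => (unitX sqq Q j : _ ⧸ scalarUnits R _) ^ k j).prod := by
    rw [unitMonomial, ← QuotientGroup.mk'_apply, map_list_prod, List.map_map]
    simp only [Function.comp_def, map_zpow, QuotientGroup.mk'_apply]
  rw [QuotientGroup.mk_mul, QuotientGroup.mk_zpow, hmk, hmk]
  exact (zpow_mul_prod_map_zpow (mk_unitX_commute sqq Q) (List.nodup_finRange r)
    (List.mem_finRange i) n k).symm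

theorem adjoin_range_X_Xinv :
    Algebra.adjoin R (Set.range (Sum.elim (X sqq Q) (Xinv sqq Q))) = ⊤ := by
  have : Sum.elim (X sqq Q) (Xinv sqq Q)
      = RingQuot.mkAlgHom R (QTRel R sqq Q) ∘ FreeAlgebra.ι R := by
    ext (i | i) <;> rfl
  rw [this]
  exact RingQuot.adjoin_range_mkAlgHom_ι _

theorem span_unitMonomial :
    Submodule.span R (Set.range fun k => (unitMonomial sqq Q k : QuantumTorus R sqq Q)) = ⊤ := by
  have h1 : unitMonomial sqq Q 0 = 1 := by simp [unitMonomial]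
  refine span_range_eq_top_of_mul_mem (adjoin_range_X_Xinv sqq Q)
    (Submodule.subset_span ⟨0, by simp only [h1, Units.val_one]⟩) ?_
  rintro _ ⟨x, rfl⟩ k
  obtain ⟨i, n, hx⟩ : ∃ (i : Fin r) (n : ℤ),
      Sum.elim (X sqq Q) (Xinv sqq Q) x = ((unitX sqq Q i ^ n : (QuantumTorus R sqq Q)ˣ) : _) := by
    cases x with
    | inl i => exact ⟨i, 1, by simp [unitX]⟩
    | inr i => exact ⟨i, -1, by simp [unitX]⟩
  obtain ⟨c, hc⟩ := exists_unitX_zpow_mul_unitMonomial sqq Q i n k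
  rw [hx, hc]
  exact Submodule.smul_of_tower_mem _ c (Submodule.subset_span ⟨_, rfl⟩)

theorem span_monomial : Submodule.span R (Set.range (monomial sqq Q)) = ⊤ := by
  have : monomial sqq Q = (fun k => sqq ^ (-quantumUpperSum Q k)) • fun k =>
      (unitMonomial sqq Q k : QuantumTorus R sqq Q) :=
    funext (monomial_eq_smul sqq Q)
  rw [this]
  exact Module.Basis.units_smul_span_eq_top (span_unitMonomial sqq Q)

end Span

section Independence

variable {R : Type} [CommRing R] (sqq : Rˣ) {r : ℕ} {Q : Matrix (Fin r) (Fin r) ℤ}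

local notation "T" => twistedShift (R := R) (pairingHom Q) sqq

noncomputable def twistedRep (hQ : Qᵀ = -Q) :
    QuantumTorus R sqq Q →ₐ[R] Module.End R ((Fin r → ℤ) →₀ R) :=
  RingQuot.liftAlgHom R ⟨FreeAlgebra.lift R
      (Sum.elim (fun i => T (Pi.single i 1)) (fun i => T (-Pi.single i 1))), by
    intro x y h
    induction h with
    | mul_inv i | inv_mul i =>
      simp [twistedShift_mul, pairingHom_single_single, twistedShift_zero,
        Matrix.apply_self_eq_zero_of_transpose_eq_neg hQ]
    | qcomm i j =>
      simp only [map_mul, map_smul, FreeAlgebra.lift_ι_apply, Sum.elim_inl, twistedShift_mul,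
        pairingHom_single_single, Matrix.apply_swap_eq_neg_of_transpose_eq_neg hQ i j,
        add_comm (Pi.single j 1)]
      rw [← Units.smul_def, smul_smul, ← zpow_add]
      congr 2
      ring⟩

theorem twistedRep_X (hQ : Qᵀ = -Q) (i : Fin r) :
    twistedRep sqq hQ (X sqq Q i) = T (Pi.single i 1) :=
  (RingQuot.liftAlgHom_mkAlgHom_apply _ _ _ _).trans (FreeAlgebra.lift_ι_apply _ _)

theorem twistedRep_Xinv (hQ : Qᵀ = -Q) (i : Fin r) :
    twistedRep sqq hQ (Xinv sqq Q i) = T (-Pi.single i 1) :=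
  (RingQuot.liftAlgHom_mkAlgHom_apply _ _ _ _).trans (FreeAlgebra.lift_ι_apply _ _)

theorem twistedRep_genPow (hQ : Qᵀ = -Q) (i : Fin r) (m : ℤ) :
    twistedRep sqq hQ (genPow sqq Q i m) = T (m • Pi.single i 1) := by
  have hi : pairingHom Q (Pi.single i 1) (Pi.single i 1) = 0 := by
    rw [pairingHom_single_single, Matrix.apply_self_eq_zero_of_transpose_eq_neg hQ]
  unfold genPow
  split_ifs with hm
  · rw [map_pow, twistedRep_X, twistedShift_pow _ _ hi, ← natCast_zsmul, Int.toNat_of_nonneg hm]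
  · rw [map_pow, twistedRep_Xinv, twistedShift_pow _ _ (by simpa using hi), ← natCast_zsmul,
      Int.toNat_of_nonneg (by omega), smul_neg, neg_smul, neg_neg]

theorem exists_twistedRep_monomial (hQ : Qᵀ = -Q) (k : Fin r → ℤ) :
    ∃ u : Rˣ, twistedRep sqq hQ (monomial sqq Q k) = u • T k := by
  obtain ⟨u, hu⟩ := exists_prod_map_twistedShift (R := R) (pairingHom Q) sqq
    ((List.finRange r).map fun i => k i • Pi.single i 1)
  have hsum : ((List.finRange r).map fun i => k i • (Pi.single i 1 : Fin r → ℤ)).sum = k := by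
    simp [← Fin.sum_univ_def, ← Pi.single_smul', Finset.univ_sum_single]
  rw [hsum] at hu
  refine ⟨sqq ^ (-quantumUpperSum Q k) * u, ?_⟩
  rw [monomial, map_smul, map_list_prod, List.map_map, ← Units.smul_def, mul_smul, ← hu,
    List.map_map]
  simp only [Function.comp_def, twistedRep_genPow]

theorem linearIndependent_monomial (hQ : Qᵀ = -Q) :
    LinearIndependent R (monomial sqq Q (R := R)) := by
  choose u hu using exists_twistedRep_monomial sqq hQ
  let ε := (LinearMap.applyₗ (Finsupp.single 0 1)).comp (twistedRep sqq hQ).toLinearMap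
  have hε : ε ∘ monomial sqq Q = u • ⇑(Finsupp.basisSingleOne (R := R)) := by
    ext k : 1
    simp [ε, hu]
  exact .of_comp ε (hε ▸ Finsupp.basisSingleOne.linearIndependent.units_smul u)

end Independence

end QuantumTorus

theorem quantumTorus_monomials_basis_general (R : Type) [CommRing R] (sqq : Rˣ)
    (r : ℕ) (Q : Matrix (Fin r) (Fin r) ℤ) (hQ : Qᵀ = -Q) :
    Module.Free R (QuantumTorus R sqq Q) ∧
      ∃ b : Module.Basis (Fin r → ℤ) R (QuantumTorus R sqq Q),
        ∀ k : Fin r → ℤ, b k = QuantumTorus.monomial sqq Q k := by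
  have hli := QuantumTorus.linearIndependent_monomial sqq hQ
  have hsp := (QuantumTorus.span_monomial sqq Q).ge
  exact ⟨.of_basis (.mk hli hsp), .mk hli hsp, Module.Basis.mk_apply hli hsp⟩

/-- For a commutative ring `R` with distinguished invertible element
`q^{1/2}`, `r ≥ 1`, and an antisymmetric `r×r` integer matrix `Q`, the quantum torus
`T(Q)` is a free `R`-module with basis the normalized monomials `{x^k : k ∈ ℤ^r}`. -/
theorem quantumTorus_monomials_basis (R : Type) [CommRing R] (sqq : Rˣ)
    (r : ℕ) (hr : 1 ≤ r) (Q : Matrix (Fin r) (Fin r) ℤ) (hQ : Qᵀ = -Q) :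
    Module.Free R (QuantumTorus R sqq Q) ∧
      ∃ b : Module.Basis (Fin r → ℤ) R (QuantumTorus R sqq Q),
        ∀ k : Fin r → ℤ, b k = QuantumTorus.monomial sqq Q k :=
  quantumTorus_monomials_basis_general R sqq r Q hQ
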